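/- There exists a constant c > 0, depending only on L and h, such that for all u of class C² on M̄ vanishing on Γ_l ∪ Γ_b with ∫_{−h}^0 u(x,z) dz = 0 for all x, all φ of class C¹ on M̄ vanishing on Γ_l ∪ Γ_b, and all continuous ψ on M̄, one has | ∫_M ( u ∂_x φ + w(u) ∂_z φ ) ψ dM | ≤ c ‖u‖_{H¹}^{1/2} |u|_{H²}^{1/2} ‖φ‖_{H¹} |ψ|. -/

import Mathlib

open MeasureTheory Set intervalIntegral

/-- Partial derivative in the first (horizontal, `x`) variable. -/
noncomputable def pdx (f : ℝ × ℝ → ℝ) (p : ℝ × ℝ) : ℝ := fderiv ℝ f p (1, 0)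

/-- Partial derivative in the second (vertical, `z`) variable. -/
noncomputable def pdz (f : ℝ × ℝ → ℝ) (p : ℝ × ℝ) : ℝ := fderiv ℝ f p (0, 1)

/-- The diagnostic vertical velocity `w(u)(x,z) = ∫_z^0 ∂ₓ u(x,s) ds`. -/
noncomputable def wOp (u : ℝ × ℝ → ℝ) (p : ℝ × ℝ) : ℝ := ∫ s in p.2..0, pdx u (p.1, s)

/-- The open domain `M = (0,L) × (-h,0)`. -/
def dom (L h : ℝ) : Set (ℝ × ℝ) := Ioo 0 L ×ˢ Ioo (-h) 0

/-- The closed domain `M̄ = [0,L] × [-h,0]`. -/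
def cdom (L h : ℝ) : Set (ℝ × ℝ) := Icc 0 L ×ˢ Icc (-h) 0

/-- The `L²(M)` norm. -/
noncomputable def l2 (L h : ℝ) (f : ℝ × ℝ → ℝ) : ℝ :=
  Real.sqrt (∫ p in dom L h, f p ^ 2)

/-- The `H¹(M)` norm. -/
noncomputable def h1n (L h : ℝ) (f : ℝ × ℝ → ℝ) : ℝ :=
  Real.sqrt (l2 L h f ^ 2 + l2 L h (pdx f) ^ 2 + l2 L h (pdz f) ^ 2)

/-- The `H²(M)` norm. -/
noncomputable def h2n (L h : ℝ) (f : ℝ × ℝ → ℝ) : ℝ :=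
  Real.sqrt (h1n L h f ^ 2 + l2 L h (pdx (pdx f)) ^ 2 + l2 L h (pdx (pdz f)) ^ 2
    + l2 L h (pdz (pdz f)) ^ 2)

/-! The integral is bounded by `‖u‖_∞ |∂ₓφ| |ψ| + ‖w(u)‖_∞ |∂_z φ| |ψ|`, so it suffices to bound
`u` and `w(u)` pointwise by `(‖u‖_{H¹} |u|_{H²})^{1/2}`.

Since `u` vanishes at `z = -h` and at `x = 0`, writing `u(x,z)²` as a `z`-integral of `2 u ∂_z u`,
and `u ∂_z u` as an `x`-integral of `∂ₓ(u ∂_z u)`, gives `u² ≤ 2 ∫_M |∂ₓ(u ∂_z u)|`, which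
Cauchy–Schwarz bounds by `4 ‖u‖_{H¹} |u|_{H²}`.

For `w(u)`, Cauchy–Schwarz in `z` gives `w(u)(x,z)² ≤ h A(x)` with `A(x) = ∫ (∂ₓu)²(x,s) ds`. The
oscillation of `A` on `[0,L]` is at most `2 ∫_M |∂ₓu ∂ₓₓu|`, so `A(x)` exceeds its mean
`|∂ₓu|² / L` by at most that much. -/

section Integrals

variable {α : Type*} [MeasurableSpace α] {μ : Measure α}

lemma integral_abs_mul_le_sqrt_mul_sqrt {f g : α → ℝ} (hf : MemLp f 2 μ) (hg : MemLp g 2 μ) :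
    ∫ a, |f a * g a| ∂μ ≤ √(∫ a, f a ^ 2 ∂μ) * √(∫ a, g a ^ 2 ∂μ) := by
  have h2 : ENNReal.ofReal 2 = 2 := by norm_num
  have := integral_mul_norm_le_Lp_mul_Lq Real.HolderConjugate.two_two
    (h2 ▸ hf : MemLp f (ENNReal.ofReal 2) μ) (h2 ▸ hg : MemLp g (ENNReal.ofReal 2) μ)
  simpa only [Real.rpow_two, Real.norm_eq_abs, sq_abs, ← Real.sqrt_eq_rpow, ← abs_mul] using this

lemma abs_integral_mul_mul_le_of_abs_le {f g ψ : α → ℝ} {K : ℝ} (hK0 : 0 ≤ K)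
    (hK : ∀ᵐ a ∂μ, |f a| ≤ K) (hg : MemLp g 2 μ) (hψ : MemLp ψ 2 μ) :
    |∫ a, f a * g a * ψ a ∂μ| ≤ K * (√(∫ a, g a ^ 2 ∂μ) * √(∫ a, ψ a ^ 2 ∂μ)) := by
  have hgψ : Integrable (fun a => |g a * ψ a|) μ := (hg.integrable_mul hψ).abs
  calc |∫ a, f a * g a * ψ a ∂μ| ≤ ∫ a, |f a * g a * ψ a| ∂μ := abs_integral_le_integral_abs
    _ ≤ ∫ a, K * |g a * ψ a| ∂μ := by
        refine integral_mono_of_nonneg (.of_forall fun a => abs_nonneg _) (hgψ.const_mul K) ?_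
        filter_upwards [hK] with a ha
        rw [mul_assoc, abs_mul]
        exact mul_le_mul_of_nonneg_right ha (abs_nonneg _)
    _ = K * ∫ a, |g a * ψ a| ∂μ := integral_const_mul K _
    _ ≤ K * (√(∫ a, g a ^ 2 ∂μ) * √(∫ a, ψ a ^ 2 ∂μ)) :=
        mul_le_mul_of_nonneg_left (integral_abs_mul_le_sqrt_mul_sqrt hg hψ) hK0

lemma Continuous.memLp_restrict_of_subset_isCompact {X : Type*} [TopologicalSpace X]
    [MeasurableSpace X] [OpensMeasurableSpace X] {ν : Measure X} [IsFiniteMeasureOnCompacts ν]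
    {s K : Set X} (hs : MeasurableSet s) (hK : IsCompact K) (hsK : s ⊆ K) {f : X → ℝ}
    (hf : Continuous f) (p : ENNReal) : MemLp f p (ν.restrict s) := by
  have : IsFiniteMeasure (ν.restrict s) :=
    ⟨by simpa using (measure_mono hsK).trans_lt hK.measure_lt_top⟩
  obtain ⟨C, hC⟩ := hK.exists_bound_of_continuousOn hf.continuousOn
  exact .of_bound hf.aestronglyMeasurable C (ae_restrict_of_forall_mem hs fun x hx => hC x (hsK hx))

end Integrals

section OneVariable

lemma abs_sub_le_integral_abs_deriv {f f' : ℝ → ℝ} {a b x y : ℝ}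
    (hf : ∀ t ∈ Icc a b, HasDerivAt f (f' t) t) (hf' : IntervalIntegrable f' volume a b)
    (hx : x ∈ Icc a b) (hy : y ∈ Icc a b) : |f x - f y| ≤ ∫ t in a..b, |f' t| := by
  wlog hyx : y ≤ x generalizing x y
  · rw [abs_sub_comm]
    exact this hy hx (le_of_not_ge hyx)
  have hsub : uIcc y x ⊆ Icc a b := uIcc_subset_Icc hy hx
  have hab : a ≤ b := hx.1.trans hx.2
  rw [← integral_eq_sub_of_hasDerivAt (fun t ht => hf t (hsub ht))
    (hf'.mono_set (by rwa [uIcc_of_le hab]))]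
  calc |∫ t in y..x, f' t| ≤ ∫ t in y..x, |f' t| := abs_integral_le_integral_abs hyx
    _ ≤ ∫ t in a..b, |f' t| :=
        integral_mono_interval hy.1 hyx hx.2 (.of_forall fun t => abs_nonneg _) hf'.abs

lemma le_integral_div_add_of_sub_le {F : ℝ → ℝ} {a b x K : ℝ} (hab : a < b)
    (hF : IntervalIntegrable F volume a b) (hK : ∀ y ∈ Icc a b, F x - F y ≤ K) :
    F x ≤ (∫ y in a..b, F y) / (b - a) + K := by
  have := integral_mono_on hab.le intervalIntegrable_const hF
    (fun y hy => by linarith [hK y hy] : ∀ y ∈ Icc a b, F x - K ≤ F y)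
  rw [intervalIntegral.integral_const, smul_eq_mul] at this
  rw [← sub_le_iff_le_add, le_div_iff₀ (sub_pos.2 hab)]
  linarith

lemma sq_integral_abs_le_mul_integral_sq {g : ℝ → ℝ} {a b : ℝ} (hab : a ≤ b)
    (hg : Continuous g) : (∫ t in a..b, |g t|) ^ 2 ≤ (b - a) * ∫ t in a..b, g t ^ 2 := by
  have hmem : ∀ f : ℝ → ℝ, Continuous f → MemLp f 2 (volume.restrict (Ioc a b)) := fun f hf =>
    hf.memLp_restrict_of_subset_isCompact measurableSet_Ioc isCompact_Icc Ioc_subset_Icc_self 2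
  have hcs := integral_abs_mul_le_sqrt_mul_sqrt (hmem g hg) (hmem (fun _ => 1) continuous_const)
  have hlen : ∫ _ in Ioc a b, (1:ℝ) = b - a := by simp [hab]
  simp only [mul_one, one_pow, hlen] at hcs
  rw [integral_of_le hab, integral_of_le hab]
  calc (∫ t in Ioc a b, |g t|) ^ 2 ≤ (√(∫ t in Ioc a b, g t ^ 2) * √(b - a)) ^ 2 :=
        pow_le_pow_left₀ (integral_nonneg fun t => abs_nonneg _) hcs 2
    _ = (b - a) * ∫ t in Ioc a b, g t ^ 2 := by
        rw [mul_pow, Real.sq_sqrt (integral_nonneg fun t => sq_nonneg _),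
          Real.sq_sqrt (sub_nonneg.2 hab), mul_comm]

end OneVariable

section PartialDerivatives

variable {f : ℝ × ℝ → ℝ}

lemma hasDerivAt_pdx {x z : ℝ} (hf : DifferentiableAt ℝ f (x, z)) :
    HasDerivAt (fun t => f (t, z)) (pdx f (x, z)) x :=
  hf.hasFDerivAt.comp_hasDerivAt x ((hasDerivAt_id x).prodMk (hasDerivAt_const x z))

lemma hasDerivAt_pdz {x z : ℝ} (hf : DifferentiableAt ℝ f (x, z)) :
    HasDerivAt (fun s => f (x, s)) (pdz f (x, z)) z :=
  hf.hasFDerivAt.comp_hasDerivAt z ((hasDerivAt_const z x).prodMk (hasDerivAt_id z))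

lemma contDiff_pdx {m n : WithTop ℕ∞} (hf : ContDiff ℝ n f) (hmn : m + 1 ≤ n) :
    ContDiff ℝ m (pdx f) :=
  (ContinuousLinearMap.apply ℝ ℝ ((1 : ℝ), (0 : ℝ))).contDiff.comp (hf.fderiv_right hmn)

lemma contDiff_pdz {m n : WithTop ℕ∞} (hf : ContDiff ℝ n f) (hmn : m + 1 ≤ n) :
    ContDiff ℝ m (pdz f) :=
  (ContinuousLinearMap.apply ℝ ℝ ((0 : ℝ), (1 : ℝ))).contDiff.comp (hf.fderiv_right hmn)

lemma continuous_pdx (hf : ContDiff ℝ 1 f) : Continuous (pdx f) :=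
  (contDiff_pdx (m := 0) hf (by norm_num)).continuous

lemma continuous_pdz (hf : ContDiff ℝ 1 f) : Continuous (pdz f) :=
  (contDiff_pdz (m := 0) hf (by norm_num)).continuous

lemma continuous_wOp (hf : ContDiff ℝ 1 f) : Continuous (wOp f) := by
  have hcont : Continuous fun p : ℝ × ℝ => ∫ s in (0 : ℝ)..p.2, pdx f (p.1, s) :=
    continuous_parametric_intervalIntegral_of_continuous (f := fun p s => pdx f (p.1, s))
      ((continuous_pdx hf).comp (continuous_fst.fst.prodMk continuous_snd)) continuous_snd
  have hw : wOp f = fun p => -∫ s in (0 : ℝ)..p.2, pdx f (p.1, s) := by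
    funext p
    rw [wOp, integral_symm]
  exact hw ▸ hcont.neg

end PartialDerivatives

section Domain

variable {L h : ℝ}

lemma measurableSet_dom : MeasurableSet (dom L h) := measurableSet_Ioo.prod measurableSet_Ioo

lemma dom_subset_cdom : dom L h ⊆ cdom L h :=
  prod_mono Ioo_subset_Icc_self Ioo_subset_Icc_self

lemma isCompact_cdom : IsCompact (cdom L h) := isCompact_Icc.prod isCompact_Icc

lemma memLp_dom {f : ℝ × ℝ → ℝ} (hf : Continuous f) : MemLp f 2 (volume.restrict (dom L h)) :=
  hf.memLp_restrict_of_subset_isCompact measurableSet_dom isCompact_cdom dom_subset_cdom 2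

lemma integrableOn_dom {f : ℝ × ℝ → ℝ} (hf : Continuous f) : IntegrableOn f (dom L h) :=
  (hf.continuousOn.integrableOn_compact isCompact_cdom).mono_set dom_subset_cdom

lemma integral_dom (hL : 0 ≤ L) (hh : 0 ≤ h) {f : ℝ × ℝ → ℝ} (hf : IntegrableOn f (dom L h)) :
    ∫ p in dom L h, f p = ∫ x in 0..L, ∫ z in -h..0, f (x, z) := by
  rw [dom, Measure.volume_eq_prod] at hf ⊢
  simp only [setIntegral_prod f hf, integral_of_le hL, integral_of_le (neg_nonpos.2 hh),
    integral_Ioc_eq_integral_Ioo]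

lemma integral_dom_swap (hL : 0 ≤ L) (hh : 0 ≤ h) {f : ℝ × ℝ → ℝ}
    (hf : IntegrableOn f (dom L h)) :
    ∫ p in dom L h, f p = ∫ z in -h..0, ∫ x in 0..L, f (x, z) := by
  rw [integral_dom hL hh hf]
  simp only [integral_of_le hL, integral_of_le (neg_nonpos.2 hh), integral_Ioc_eq_integral_Ioo]
  refine integral_integral_swap ?_
  rw [Measure.prod_restrict, ← Measure.volume_eq_prod]
  exact hf

lemma l2_sq (f : ℝ × ℝ → ℝ) : l2 L h f ^ 2 = ∫ p in dom L h, f p ^ 2 :=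
  Real.sq_sqrt (integral_nonneg fun _ => sq_nonneg _)

lemma integral_abs_mul_le_l2 {f g : ℝ × ℝ → ℝ} (hf : Continuous f) (hg : Continuous g) :
    ∫ p in dom L h, |f p * g p| ≤ l2 L h f * l2 L h g :=
  integral_abs_mul_le_sqrt_mul_sqrt (memLp_dom hf) (memLp_dom hg)

lemma abs_integral_mul_mul_le_l2 {f g ψ : ℝ × ℝ → ℝ} (hg : Continuous g) (hψ : Continuous ψ)
    {K : ℝ} (hK0 : 0 ≤ K) (hK : ∀ p ∈ dom L h, |f p| ≤ K) :
    |∫ p in dom L h, f p * g p * ψ p| ≤ K * (l2 L h g * l2 L h ψ) :=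
  abs_integral_mul_mul_le_of_abs_le hK0 (ae_restrict_of_forall_mem measurableSet_dom hK)
    (memLp_dom hg) (memLp_dom hψ)

end Domain

section Norms

variable {L h : ℝ} (f : ℝ × ℝ → ℝ)

lemma l2_nonneg : 0 ≤ l2 L h f := Real.sqrt_nonneg _

lemma h1n_nonneg : 0 ≤ h1n L h f := Real.sqrt_nonneg _

lemma h2n_nonneg : 0 ≤ h2n L h f := Real.sqrt_nonneg _

lemma l2_le_h1n : l2 L h f ≤ h1n L h f := by
  apply Real.le_sqrt_of_sq_le
  linarith [sq_nonneg (l2 L h (pdx f)), sq_nonneg (l2 L h (pdz f))]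

lemma l2_pdx_le_h1n : l2 L h (pdx f) ≤ h1n L h f := by
  apply Real.le_sqrt_of_sq_le
  linarith [sq_nonneg (l2 L h f), sq_nonneg (l2 L h (pdz f))]

lemma l2_pdz_le_h1n : l2 L h (pdz f) ≤ h1n L h f := by
  apply Real.le_sqrt_of_sq_le
  linarith [sq_nonneg (l2 L h f), sq_nonneg (l2 L h (pdx f))]

lemma h1n_le_h2n : h1n L h f ≤ h2n L h f := by
  apply Real.le_sqrt_of_sq_le
  linarith [sq_nonneg (l2 L h (pdx (pdx f))),
    sq_nonneg (l2 L h (pdx (pdz f))), sq_nonneg (l2 L h (pdz (pdz f)))]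

lemma l2_pdx_pdx_le_h2n : l2 L h (pdx (pdx f)) ≤ h2n L h f := by
  apply Real.le_sqrt_of_sq_le
  linarith [sq_nonneg (h1n L h f),
    sq_nonneg (l2 L h (pdx (pdz f))), sq_nonneg (l2 L h (pdz (pdz f)))]

lemma l2_pdx_pdz_le_h2n : l2 L h (pdx (pdz f)) ≤ h2n L h f := by
  apply Real.le_sqrt_of_sq_le
  linarith [sq_nonneg (h1n L h f),
    sq_nonneg (l2 L h (pdx (pdx f))), sq_nonneg (l2 L h (pdz (pdz f)))]

end Norms

section SupBounds

variable {L h : ℝ} {u : ℝ × ℝ → ℝ}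

lemma sq_le_two_mul_integral_dom (hu : ContDiff ℝ 2 u)
    (hlat : ∀ z ∈ Icc (-h) 0, u (0, z) = 0) (hbot : ∀ x ∈ Icc 0 L, u (x, -h) = 0)
    {x z : ℝ} (hx : x ∈ Icc 0 L) (hz : z ∈ Icc (-h) 0) :
    u (x, z) ^ 2 ≤ 2 * ∫ p in dom L h, |pdx u p * pdz u p + u p * pdx (pdz u) p| := by
  have hL : 0 ≤ L := hx.1.trans hx.2
  have hh : 0 ≤ h := neg_nonpos.1 (hz.1.trans hz.2)
  have du : Differentiable ℝ u := hu.differentiable (by norm_num)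
  have hv : ContDiff ℝ 1 (pdz u) := contDiff_pdz hu (by norm_num)
  have cu := hu.continuous
  have cux := continuous_pdx (hu.of_le (by norm_num))
  have cv := hv.continuous
  have cvx := continuous_pdx hv
  set G : ℝ × ℝ → ℝ := fun p => pdx u p * pdz u p + u p * pdx (pdz u) p
  have hG : Continuous G := by fun_prop
  -- Integrating in `z` first and then in `x` produces `pdx (pdz u)`, the mixed derivative in `h2n`.
  have hcol : ∀ s ∈ Icc (-h) 0, |u (x, s) * pdz u (x, s)| ≤ ∫ t in 0..L, |G (t, s)| := by
    intro s hs
    have := abs_sub_le_integral_abs_deriv (f := fun t => u (t, s) * pdz u (t, s))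
      (f' := fun t => G (t, s))
      (fun t _ => (hasDerivAt_pdx (du _)).mul (hasDerivAt_pdx (hv.differentiable one_ne_zero _)))
      (Continuous.intervalIntegrable (by fun_prop) _ _) hx ⟨le_rfl, hL⟩
    simpa [hlat s hs] using this
  have hrow : u (x, z) ^ 2 ≤ ∫ s in -h..0, |2 * (u (x, s) * pdz u (x, s))| := by
    have := abs_sub_le_integral_abs_deriv (f := fun s => u (x, s) ^ 2)
      (f' := fun s => 2 * (u (x, s) * pdz u (x, s)))
      (fun s _ => ((hasDerivAt_pdz (du _)).pow 2).congr_deriv (by ring))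
      (Continuous.intervalIntegrable (by fun_prop) _ _) hz ⟨le_rfl, neg_nonpos.2 hh⟩
    simpa [hbot x hx] using this
  have hGcol : Continuous fun s => ∫ t in 0..L, |G (t, s)| :=
    continuous_parametric_intervalIntegral_of_continuous' (f := fun s t => |G (t, s)|)
      (by fun_prop) _ _
  calc u (x, z) ^ 2 ≤ ∫ s in -h..0, |2 * (u (x, s) * pdz u (x, s))| := hrow
    _ ≤ ∫ s in -h..0, 2 * ∫ t in 0..L, |G (t, s)| := by
        refine integral_mono_on (neg_nonpos.2 hh) (Continuous.intervalIntegrable (by fun_prop) _ _)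
          ((hGcol.const_mul 2).intervalIntegrable _ _) fun s hs => ?_
        rw [abs_mul, abs_two]
        exact mul_le_mul_of_nonneg_left (hcol s hs) zero_le_two
    _ = 2 * ∫ p in dom L h, |G p| := by
        rw [intervalIntegral.integral_const_mul,
          integral_dom_swap hL hh (integrableOn_dom hG.abs)]

lemma wOp_sq_le (hu : ContDiff ℝ 1 u) {x z : ℝ} (hz : z ∈ Icc (-h) 0) :
    wOp u (x, z) ^ 2 ≤ h * ∫ s in -h..0, pdx u (x, s) ^ 2 := by
  have hg : Continuous fun s => pdx u (x, s) :=
    (continuous_pdx hu).comp (Continuous.prodMk_right x)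
  have habs : |wOp u (x, z)| ≤ ∫ s in -h..0, |pdx u (x, s)| :=
    (abs_integral_le_integral_abs hz.2).trans (integral_mono_interval hz.1 hz.2 le_rfl
      (.of_forall fun _ => abs_nonneg _) (hg.abs.intervalIntegrable _ _))
  calc wOp u (x, z) ^ 2 = |wOp u (x, z)| ^ 2 := (sq_abs _).symm
    _ ≤ (∫ s in -h..0, |pdx u (x, s)|) ^ 2 := pow_le_pow_left₀ (abs_nonneg _) habs 2
    _ ≤ (0 - -h) * ∫ s in -h..0, pdx u (x, s) ^ 2 :=
        sq_integral_abs_le_mul_integral_sq (hz.1.trans hz.2) hg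
    _ = h * ∫ s in -h..0, pdx u (x, s) ^ 2 := by rw [zero_sub, neg_neg]

lemma integral_sq_slice_le (hL : 0 < L) (hh : 0 ≤ h) {v : ℝ × ℝ → ℝ} (hv : ContDiff ℝ 1 v)
    {x : ℝ} (hx : x ∈ Icc 0 L) :
    ∫ s in -h..0, v (x, s) ^ 2 ≤
      (∫ p in dom L h, v p ^ 2) / L + 2 * ∫ p in dom L h, |v p * pdx v p| := by
  have dv : Differentiable ℝ v := hv.differentiable one_ne_zero
  have cv := hv.continuous
  have cvx := continuous_pdx hv
  set A : ℝ → ℝ := fun t => ∫ s in -h..0, v (t, s) ^ 2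
  have hA : Continuous A :=
    continuous_parametric_intervalIntegral_of_continuous' (f := fun t s => v (t, s) ^ 2)
      (by fun_prop) _ _
  have hosc : ∀ t ∈ Icc 0 L, A x - A t ≤ 2 * ∫ p in dom L h, |v p * pdx v p| := by
    intro t ht
    have hpt : ∀ s, v (x, s) ^ 2 - v (t, s) ^ 2 ≤ ∫ r in 0..L, |2 * (v (r, s) * pdx v (r, s))| :=
      fun s => (le_abs_self _).trans (abs_sub_le_integral_abs_deriv
        (f := fun r => v (r, s) ^ 2) (f' := fun r => 2 * (v (r, s) * pdx v (r, s)))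
        (fun r _ => ((hasDerivAt_pdx (dv _)).pow 2).congr_deriv (by ring))
        (Continuous.intervalIntegrable (by fun_prop) _ _) hx ht)
    have hcol : Continuous fun s => ∫ r in 0..L, |2 * (v (r, s) * pdx v (r, s))| :=
      continuous_parametric_intervalIntegral_of_continuous'
        (f := fun s r => |2 * (v (r, s) * pdx v (r, s))|) (by fun_prop) _ _
    calc A x - A t = ∫ s in -h..0, (v (x, s) ^ 2 - v (t, s) ^ 2) :=
          (integral_sub (Continuous.intervalIntegrable (by fun_prop) _ _)
            (Continuous.intervalIntegrable (by fun_prop) _ _)).symm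
      _ ≤ ∫ s in -h..0, ∫ r in 0..L, |2 * (v (r, s) * pdx v (r, s))| :=
          integral_mono_on (neg_nonpos.2 hh) (Continuous.intervalIntegrable (by fun_prop) _ _)
            (hcol.intervalIntegrable _ _) fun s _ => hpt s
      _ = 2 * ∫ p in dom L h, |v p * pdx v p| := by
          simp only [abs_mul, abs_two, intervalIntegral.integral_const_mul]
          rw [integral_dom_swap hL.le hh (integrableOn_dom (by fun_prop))]
  have hint : ∫ t in 0..L, A t = ∫ p in dom L h, v p ^ 2 :=
    (integral_dom hL.le hh (integrableOn_dom (f := fun p => v p ^ 2) (by fun_prop))).symm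
  have := le_integral_div_add_of_sub_le hL (hA.intervalIntegrable _ _) hosc
  rwa [sub_zero, hint] at this

lemma abs_le_sqrt_of_mem_cdom (hu : ContDiff ℝ 2 u)
    (hlat : ∀ z ∈ Icc (-h) 0, u (0, z) = 0) (hbot : ∀ x ∈ Icc 0 L, u (x, -h) = 0)
    {p : ℝ × ℝ} (hp : p ∈ cdom L h) : |u p| ≤ √(4 * (h1n L h u * h2n L h u)) := by
  have hv : ContDiff ℝ 1 (pdz u) := contDiff_pdz hu (by norm_num)
  have cu := hu.continuous
  have cux := continuous_pdx (hu.of_le (by norm_num))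
  have cv := hv.continuous
  have cvx := continuous_pdx hv
  have hG : ∫ q in dom L h, |pdx u q * pdz u q + u q * pdx (pdz u) q| ≤
      l2 L h (pdx u) * l2 L h (pdz u) + l2 L h u * l2 L h (pdx (pdz u)) :=
    calc ∫ q in dom L h, |pdx u q * pdz u q + u q * pdx (pdz u) q|
        ≤ ∫ q in dom L h, (|pdx u q * pdz u q| + |u q * pdx (pdz u) q|) :=
          integral_mono (integrableOn_dom (by fun_prop)) (integrableOn_dom (by fun_prop))
            fun q => abs_add_le _ _
      _ = (∫ q in dom L h, |pdx u q * pdz u q|) + ∫ q in dom L h, |u q * pdx (pdz u) q| :=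
          integral_add (integrableOn_dom (by fun_prop)) (integrableOn_dom (by fun_prop))
      _ ≤ _ := add_le_add (integral_abs_mul_le_l2 cux cv) (integral_abs_mul_le_l2 cu cvx)
  have h₁ : l2 L h (pdx u) * l2 L h (pdz u) ≤ h1n L h u * h2n L h u :=
    mul_le_mul (l2_pdx_le_h1n u) ((l2_pdz_le_h1n u).trans (h1n_le_h2n u))
      (l2_nonneg _) (h1n_nonneg u)
  have h₂ : l2 L h u * l2 L h (pdx (pdz u)) ≤ h1n L h u * h2n L h u :=
    mul_le_mul (l2_le_h1n u) (l2_pdx_pdz_le_h2n u) (l2_nonneg _) (h1n_nonneg u)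
  have := sq_le_two_mul_integral_dom hu hlat hbot hp.1 hp.2
  exact Real.abs_le_sqrt (by linarith)

lemma abs_wOp_le_sqrt_of_mem_cdom (hL : 0 < L) (hu : ContDiff ℝ 2 u) {p : ℝ × ℝ}
    (hp : p ∈ cdom L h) : |wOp u p| ≤ √(h * (1 / L + 2) * (h1n L h u * h2n L h u)) := by
  have hh : 0 ≤ h := neg_nonpos.1 (hp.2.1.trans hp.2.2)
  have hv : ContDiff ℝ 1 (pdx u) := contDiff_pdx hu (by norm_num)
  have hN₁ : ∫ q in dom L h, pdx u q ^ 2 ≤ h1n L h u * h2n L h u := by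
    rw [← l2_sq, sq]
    exact mul_le_mul (l2_pdx_le_h1n u) ((l2_pdx_le_h1n u).trans (h1n_le_h2n u))
      (l2_nonneg _) (h1n_nonneg u)
  have hN₂ : ∫ q in dom L h, |pdx u q * pdx (pdx u) q| ≤ h1n L h u * h2n L h u :=
    (integral_abs_mul_le_l2 hv.continuous (continuous_pdx hv)).trans
      (mul_le_mul (l2_pdx_le_h1n u) (l2_pdx_pdx_le_h2n u) (l2_nonneg _) (h1n_nonneg u))
  refine Real.abs_le_sqrt ?_
  calc wOp u p ^ 2 ≤ h * ∫ s in -h..0, pdx u (p.1, s) ^ 2 :=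
        wOp_sq_le (hu.of_le (by norm_num)) hp.2
    _ ≤ h * ((∫ q in dom L h, pdx u q ^ 2) / L
          + 2 * ∫ q in dom L h, |pdx u q * pdx (pdx u) q|) :=
        mul_le_mul_of_nonneg_left (integral_sq_slice_le hL hh hv hp.1) hh
    _ ≤ h * ((h1n L h u * h2n L h u) / L + 2 * (h1n L h u * h2n L h u)) := by gcongr
    _ = h * (1 / L + 2) * (h1n L h u * h2n L h u) := by ring

end SupBounds

lemma abs_integral_trilinear_le {L h : ℝ} {u w φ ψ : ℝ × ℝ → ℝ} (hu : Continuous u)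
    (hw : Continuous w) (hφ : ContDiff ℝ 1 φ) (hψ : Continuous ψ) {Ku Kw : ℝ} (hKu₀ : 0 ≤ Ku)
    (hKw₀ : 0 ≤ Kw) (hKu : ∀ p ∈ dom L h, |u p| ≤ Ku) (hKw : ∀ p ∈ dom L h, |w p| ≤ Kw) :
    |∫ p in dom L h, (u p * pdx φ p + w p * pdz φ p) * ψ p| ≤
      (Ku + Kw) * h1n L h φ * l2 L h ψ := by
  have cφx := continuous_pdx hφ
  have cφz := continuous_pdz hφ
  have hsplit : ∫ p in dom L h, (u p * pdx φ p + w p * pdz φ p) * ψ p =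
      (∫ p in dom L h, u p * pdx φ p * ψ p) + ∫ p in dom L h, w p * pdz φ p * ψ p := by
    rw [← integral_add (integrableOn_dom (by fun_prop)) (integrableOn_dom (by fun_prop))]
    congr 1 with p
    ring
  have hψ₀ := l2_nonneg (L := L) (h := h) ψ
  calc |∫ p in dom L h, (u p * pdx φ p + w p * pdz φ p) * ψ p|
      ≤ |∫ p in dom L h, u p * pdx φ p * ψ p| + |∫ p in dom L h, w p * pdz φ p * ψ p| :=
        hsplit ▸ abs_add_le _ _
    _ ≤ Ku * (l2 L h (pdx φ) * l2 L h ψ) + Kw * (l2 L h (pdz φ) * l2 L h ψ) :=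
        add_le_add (abs_integral_mul_mul_le_l2 cφx hψ hKu₀ hKu)
          (abs_integral_mul_mul_le_l2 cφz hψ hKw₀ hKw)
    _ ≤ Ku * (h1n L h φ * l2 L h ψ) + Kw * (h1n L h φ * l2 L h ψ) := by
        gcongr
        exacts [l2_pdx_le_h1n φ, l2_pdz_le_h1n φ]
    _ = (Ku + Kw) * h1n L h φ * l2 L h ψ := by ring

theorem stmt12_general (L h : ℝ) (hL : 0 < L) :
    ∃ c > 0, ∀ u φ ψ : ℝ × ℝ → ℝ,
      ContDiff ℝ 2 u → ContDiff ℝ 1 φ → Continuous ψ →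
      (∀ z ∈ Icc (-h) (0:ℝ), u (0, z) = 0 ∧ u (L, z) = 0) →
      (∀ x ∈ Icc (0:ℝ) L, u (x, -h) = 0) →
      (∀ x ∈ Icc (0:ℝ) L, (∫ z in (-h)..(0:ℝ), u (x, z)) = 0) →
      (∀ z ∈ Icc (-h) (0:ℝ), φ (0, z) = 0 ∧ φ (L, z) = 0) →
      (∀ x ∈ Icc (0:ℝ) L, φ (x, -h) = 0) →
      |∫ p in dom L h, (u p * pdx φ p + wOp u p * pdz φ p) * ψ p| ≤
        c * h1n L h u ^ ((1:ℝ)/2) * h2n L h u ^ ((1:ℝ)/2) * h1n L h φ * l2 L h ψ := by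
  refine ⟨2 + √(h * (1 / L + 2)), by positivity, ?_⟩
  intro u φ ψ hu hφ hψ hulat hubot _ _ _
  have hN : 0 ≤ h1n L h u * h2n L h u := mul_nonneg (h1n_nonneg u) (h2n_nonneg u)
  calc _ ≤ (√(4 * (h1n L h u * h2n L h u)) + √(h * (1 / L + 2) * (h1n L h u * h2n L h u)))
        * h1n L h φ * l2 L h ψ :=
        abs_integral_trilinear_le hu.continuous (continuous_wOp (hu.of_le (by norm_num))) hφ hψ
          (Real.sqrt_nonneg _) (Real.sqrt_nonneg _)
          (fun p hp => abs_le_sqrt_of_mem_cdom hu (fun z hz => (hulat z hz).1) hubot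
            (dom_subset_cdom hp))
          (fun p hp => abs_wOp_le_sqrt_of_mem_cdom hL hu (dom_subset_cdom hp))
    _ = _ := by
        rw [Real.sqrt_mul' _ hN, Real.sqrt_mul' _ hN, Real.sqrt_mul (h1n_nonneg u),
          ← Real.sqrt_eq_rpow, ← Real.sqrt_eq_rpow, show (4 : ℝ) = 2 ^ 2 by norm_num,
          Real.sqrt_sq zero_le_two]
        ring

theorem stmt12 (L h : ℝ) (hL : 0 < L) (hh : 0 < h) :
    ∃ c > 0, ∀ u φ ψ : ℝ × ℝ → ℝ,
      ContDiff ℝ 2 u → ContDiff ℝ 1 φ → Continuous ψ →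
      (∀ z ∈ Icc (-h) (0:ℝ), u (0, z) = 0 ∧ u (L, z) = 0) →
      (∀ x ∈ Icc (0:ℝ) L, u (x, -h) = 0) →
      (∀ x ∈ Icc (0:ℝ) L, (∫ z in (-h)..(0:ℝ), u (x, z)) = 0) →
      (∀ z ∈ Icc (-h) (0:ℝ), φ (0, z) = 0 ∧ φ (L, z) = 0) →
      (∀ x ∈ Icc (0:ℝ) L, φ (x, -h) = 0) →
      |∫ p in dom L h, (u p * pdx φ p + wOp u p * pdz φ p) * ψ p| ≤
        c * h1n L h u ^ ((1:ℝ)/2) * h2n L h u ^ ((1:ℝ)/2) * h1n L h φ * l2 L h ψ :=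
  stmt12_general L h hL
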